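/- For every integer n ≥ 1, Σ_{k=0}^{n} [(-1/2)_k (-n)_k (n+1/2)_k / ((1/4)_k (3/4)_k k!)] · (-x)^k = 1 - 2·Σ_{j=1}^{n} C(n,j) · ((2j-2)!/(j-1)!) · ((1/2+2j)_{n-j}/(1/2)_n) · x^j, as polynomials in x over the rationals. -/

import Mathlib

/-!
Compare coefficients of `x^k`, `1 ≤ k ≤ n`, expressing every Pochhammer symbol through
`(1/2)_m`: `(-1)^k (-n)_k = k! C(n,k)`, `4^k (-1/2)_k = -2 (2k-2)!/(k-1)!` (from
`4^m (1/2)_m m! = (2m)!`), and, by the duplication formula `(a)_{2k} = 4^k (a/2)_k ((a+1)/2)_k`,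
`(1/2)_n (n+1/2)_k = (1/2)_{n+k} = 4^k (1/4)_k (3/4)_k (1/2+2k)_{n-k}`.
-/

open Polynomial

/-- Rising factorial (Pochhammer symbol) over ℚ. -/
noncomputable def rf (a : ℚ) (k : ℕ) : ℚ := (ascPochhammer ℚ k).eval a

lemma rf_add (a : ℚ) (m k : ℕ) : rf a (m + k) = rf a m * rf (a + m) k := by
  simp only [rf, ← ascPochhammer_mul, eval_mul, eval_comp, eval_add, eval_X, eval_natCast]

lemma rf_succ_left (a : ℚ) (k : ℕ) : rf a (k + 1) = a * rf (a + 1) k := by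
  rw [add_comm k, rf_add]
  simp [rf]

lemma rf_pos {a : ℚ} (ha : 0 < a) (k : ℕ) : 0 < rf a k :=
  ascPochhammer_pos k a ha

lemma neg_one_pow_mul_rf_neg_natCast (n k : ℕ) :
    (-1) ^ k * rf (-(n : ℚ)) k = k.factorial * n.choose k := by
  rw [rf, ascPochhammer_eval_neg_eq_descPochhammer, ← mul_assoc, ← pow_add, Even.neg_one_pow ⟨k, rfl⟩,
    one_mul, descPochhammer_eval_eq_descFactorial, Nat.descFactorial_eq_factorial_mul_choose]
  push_cast
  rfl

lemma rf_two_mul (a : ℚ) (k : ℕ) : rf a (2 * k) = 4 ^ k * rf (a / 2) k * rf ((a + 1) / 2) k := by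
  induction k with
  | zero => simp [rf]
  | succ k ih =>
    rw [show 2 * (k + 1) = 2 * k + 1 + 1 by ring]
    simp only [rf, ascPochhammer_succ_eval] at ih ⊢
    rw [ih]
    push_cast
    ring

lemma rf_half_mul_factorial (m : ℕ) : 4 ^ m * rf (1 / 2) m * m.factorial = (2 * m).factorial := by
  have h := rf_two_mul 1 m
  norm_num [rf, ascPochhammer_eval_one] at h
  exact h.symm

lemma hypergeometric_coeff_eq (n k : ℕ) (h1 : 1 ≤ k) (h2 : k ≤ n) :
    (-1) ^ k * (rf (-1/2) k * rf (-(n : ℚ)) k * rf ((n : ℚ) + 1/2) k /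
        (rf (1/4) k * rf (3/4) k * (k.factorial : ℚ)))
      = -2 * ((n.choose k : ℚ) * (((2 * k - 2).factorial : ℚ) / ((k - 1).factorial : ℚ)) *
          (rf (1/2 + 2 * k) (n - k) / rf (1/2) n)) := by
  have hneg_half : rf (-1/2) k = -2 * (2 * k - 2).factorial / (4 ^ k * (k - 1).factorial) := by
    have h := rf_succ_left (-1/2) (k - 1)
    have h' := rf_half_mul_factorial (k - 1)
    rw [Nat.sub_add_cancel h1] at h
    rw [show 2 * (k - 1) = 2 * k - 2 by omega] at h'
    rw [h, show (-1/2 : ℚ) + 1 = 1/2 by norm_num, ← h',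
      show (4 : ℚ) ^ k = 4 * 4 ^ (k - 1) by rw [← pow_succ', Nat.sub_add_cancel h1]]
    field_simp
    ring
  have hshift : rf (n + 1/2) k = 4 ^ k * rf (1/4) k * rf (3/4) k * rf (1/2 + 2 * k) (n - k) / rf (1/2) n := by
    have hn := rf_add (1/2) n k
    have hk := rf_add (1/2) (2 * k) (n - k)
    have hd := rf_two_mul (1/2) k
    have hH := (rf_pos (by norm_num : (0 : ℚ) < 1/2) n).ne'
    rw [show (1/2 : ℚ) / 2 = 1/4 by norm_num, show ((1/2 : ℚ) + 1) / 2 = 3/4 by norm_num] at hd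
    rw [show 2 * k + (n - k) = n + k by omega, hd, hn, Nat.cast_mul, Nat.cast_ofNat] at hk
    rw [eq_div_iff hH, mul_comm, add_comm, hk]
  rw [show (-1) ^ k * (rf (-1/2) k * rf (-(n : ℚ)) k * rf ((n : ℚ) + 1/2) k /
        (rf (1/4) k * rf (3/4) k * (k.factorial : ℚ)))
      = (-1) ^ k * rf (-(n : ℚ)) k * rf (-1/2) k * rf ((n : ℚ) + 1/2) k /
        (rf (1/4) k * rf (3/4) k * (k.factorial : ℚ)) by ring,
    neg_one_pow_mul_rf_neg_natCast, hneg_half, hshift]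
  have h4 := (rf_pos (by norm_num : (0 : ℚ) < 1/4) k).ne'
  have h34 := (rf_pos (by norm_num : (0 : ℚ) < 3/4) k).ne'
  field_simp

lemma C_mul_neg_X_pow {R : Type*} [CommRing R] {c d : R} (k : ℕ) (h : (-1) ^ k * c = d) :
    C c * (-X) ^ k = C d * X ^ k := by
  rw [← h, neg_pow, map_mul, map_pow, map_neg, map_one]
  ring

theorem stmt_8_general (n : ℕ) :
    ∑ k ∈ Finset.range (n + 1),
        C (rf (-1/2) k * rf (-(n : ℚ)) k * rf ((n : ℚ) + 1/2) k /
            (rf (1/4) k * rf (3/4) k * (k.factorial : ℚ))) * (-X) ^ k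
      = 1 - 2 * ∑ j ∈ Finset.Icc 1 n,
          C ((n.choose j : ℚ) * (((2 * j - 2).factorial : ℚ) / ((j - 1).factorial : ℚ)) *
              (rf (1/2 + 2 * j) (n - j) / rf (1/2) n)) * X ^ j := by
  rw [Finset.range_eq_Ico, Finset.sum_eq_sum_Ico_succ_bot (by omega : 0 < n + 1), zero_add,
    Finset.Ico_add_one_right_eq_Icc, Finset.mul_sum, sub_eq_add_neg, ← Finset.sum_neg_distrib]
  congr 1
  · simp [rf]
  refine Finset.sum_congr rfl fun k hk => ?_
  obtain ⟨h1, h2⟩ := Finset.mem_Icc.1 hk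
  rw [C_mul_neg_X_pow k (hypergeometric_coeff_eq n k h1 h2), map_mul, map_neg, map_ofNat]
  ring

theorem stmt_8 (n : ℕ) (hn : 1 ≤ n) :
    ∑ k ∈ Finset.range (n + 1),
        C (rf (-1/2) k * rf (-(n : ℚ)) k * rf ((n : ℚ) + 1/2) k /
            (rf (1/4) k * rf (3/4) k * (k.factorial : ℚ))) * (-X) ^ k
      = 1 - 2 * ∑ j ∈ Finset.Icc 1 n,
          C ((n.choose j : ℚ) * (((2 * j - 2).factorial : ℚ) / ((j - 1).factorial : ℚ)) *
              (rf (1/2 + 2 * j) (n - j) / rf (1/2) n)) * X ^ j :=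
  stmt_8_general n
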